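/- arXiv:1411.1290 — 3 statements merged into one kernel-verified Lean document; each statement's English description precedes it below -/
import Mathlib

section
/- If x, y ∈ ℝ₊ⁿ satisfy x ≺ y (x is majorized by y) and e_k(x) = e_k(y) for some k ∈ {2,…,n}, where e_k is the k-th elementary symmetric polynomial, then the decreasing rearrangements of x and y coincide: x↓ = y↓. -/
/-!
Sort both vectors decreasingly, so that `x↓ ≺ y↓`. While `y↓ ≠ x↓`, take the first coordinate `j`
with `y_j < x↓_j` and some earlier `i` with `y_i > x↓_i`, and move from `i` to `j` the largest
amount `δ` that overshoots neither. This keeps the prefix-sum domination, makes one more coordinate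
agree with `x↓`, fixes `y_i + y_j` and increases `y_i y_j`; since
`e_k = e_k(rest) + (y_i + y_j) e_{k-1}(rest) + y_i y_j e_{k-2}(rest)` with `e_{k-2}(rest) > 0`
for `k ≤ n`, it strictly increases `e_k`. Hence `e_k(y) < e_k(x)` unless `x↓ = y↓`.
-/

open Real

/-- The `k`-th elementary symmetric polynomial of `x : Fin n → ℝ`. -/
def esymm (n k : ℕ) (x : Fin n → ℝ) : ℝ :=
  ∑ A ∈ Finset.powersetCard k (Finset.univ : Finset (Fin n)), ∏ i ∈ A, x i

open Finset

theorem Multiset.esymm_cons_succ {R : Type*} [CommSemiring R] (a : R) (s : Multiset R) (m : ℕ) :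
    (a ::ₘ s).esymm (m + 1) = s.esymm (m + 1) + a * s.esymm m := by
  simp only [Multiset.esymm, Multiset.powersetCard_cons, Multiset.map_add, Multiset.sum_add,
    Multiset.map_map, Function.comp_def, Multiset.prod_cons, Multiset.sum_map_mul_left]

theorem Multiset.esymm_cons_cons {R : Type*} [CommSemiring R] (a b : R) (s : Multiset R) (m : ℕ) :
    (a ::ₘ b ::ₘ s).esymm (m + 2) =
      s.esymm (m + 2) + (a + b) * s.esymm (m + 1) + a * b * s.esymm m := by
  rw [esymm_cons_succ, esymm_cons_succ, esymm_cons_succ]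
  ring

theorem Finset.esymm_map_val_pos {ι R : Type*} [CommSemiring R] [PartialOrder R]
    [IsStrictOrderedRing R] {s : Finset ι} {f : ι → R} {m : ℕ} (hf : ∀ i ∈ s, 0 < f i)
    (hm : m ≤ #s) : 0 < (s.val.map f).esymm m := by
  rw [Finset.esymm_map_val]
  exact sum_pos (fun t ht => prod_pos fun i hi => hf i ((mem_powersetCard.1 ht).1 hi))
    (powersetCard_nonempty.2 hm)

theorem Finset.univ_val_eq_cons_cons {ι : Type*} [Fintype ι] [DecidableEq ι] {i j : ι}
    (hij : i ≠ j) : (univ : Finset ι).val = i ::ₘ j ::ₘ ((univ.erase i).erase j).val := by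
  rw [← insert_val_of_notMem (by simp), ← insert_val_of_notMem (by simp [hij.symm]),
    insert_erase (mem_erase.2 ⟨hij.symm, mem_univ j⟩), insert_erase (mem_univ i)]

theorem esymm_eq_multisetEsymm (n k : ℕ) (x : Fin n → ℝ) :
    esymm n k x = (univ.val.map x).esymm k :=
  (Finset.esymm_map_val x univ k).symm

theorem esymm_comp_perm (n k : ℕ) (x : Fin n → ℝ) (σ : Equiv.Perm (Fin n)) :
    esymm n k (x ∘ σ) = esymm n k x := by
  rw [esymm_eq_multisetEsymm, esymm_eq_multisetEsymm, ← Multiset.map_map,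
    Multiset.map_univ_val_equiv]

theorem esymm_lt_esymm_of_add_eq_of_mul_lt {n k : ℕ} {z z' : Fin n → ℝ} {i j : Fin n}
    (hij : i ≠ j) (hz : ∀ l, 0 < z l) (hk2 : 2 ≤ k) (hkn : k ≤ n)
    (hrest : ∀ l, l ≠ i → l ≠ j → z' l = z l) (hadd : z' i + z' j = z i + z j)
    (hmul : z i * z j < z' i * z' j) : esymm n k z < esymm n k z' := by
  obtain ⟨m, rfl⟩ : ∃ m, k = m + 2 := ⟨k - 2, by omega⟩
  set t := (univ.erase i).erase j
  have hrest' : t.val.map z' = t.val.map z := Multiset.map_congr rfl fun l hl => by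
    simp only [t, mem_val, mem_erase] at hl
    exact hrest l hl.2.1 hl.1
  have hpos : 0 < (t.val.map z).esymm m := esymm_map_val_pos (fun l _ => hz l) (by
    rw [card_erase_of_mem (mem_erase.2 ⟨hij.symm, mem_univ j⟩), card_erase_of_mem (mem_univ i),
      card_univ, Fintype.card_fin]
    omega)
  rw [esymm_eq_multisetEsymm, esymm_eq_multisetEsymm, univ_val_eq_cons_cons hij,
    Multiset.map_cons, Multiset.map_cons, Multiset.map_cons, Multiset.map_cons,
    Multiset.esymm_cons_cons, Multiset.esymm_cons_cons, hrest', hadd]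
  nlinarith

section Transfer

variable {ι : Type*} [DecidableEq ι]

def transfer (z : ι → ℝ) (i j : ι) (δ : ℝ) : ι → ℝ :=
  z - Pi.single i δ + Pi.single j δ

variable {z : ι → ℝ} {i j : ι} {δ : ℝ}

theorem transfer_apply_left (hij : i ≠ j) : transfer z i j δ i = z i - δ := by
  simp [transfer, hij]

theorem transfer_apply_right (hij : i ≠ j) : transfer z i j δ j = z j + δ := by
  simp [transfer, hij.symm]

theorem transfer_apply_of_ne {l : ι} (hi : l ≠ i) (hj : l ≠ j) : transfer z i j δ l = z l := by
  simp [transfer, hi, hj]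

theorem sum_transfer (s : Finset ι) :
    ∑ l ∈ s, transfer z i j δ l =
      ∑ l ∈ s, z l - (if i ∈ s then δ else 0) + (if j ∈ s then δ else 0) := by
  simp only [transfer, Pi.add_apply, Pi.sub_apply, sum_add_distrib, sum_sub_distrib,
    sum_pi_single']

theorem transfer_pos (hz : ∀ l, 0 < z l) (hδ : 0 < δ) (hδi : δ < z i) (l : ι) :
    0 < transfer z i j δ l := by
  by_cases hij : i = j
  · subst hij
    simp [transfer, hz l]
  rcases eq_or_ne l i with rfl | hli
  · rw [transfer_apply_left hij]; linarith
  rcases eq_or_ne l j with rfl | hlj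
  · rw [transfer_apply_right hij]; linarith [hz l]
  · rw [transfer_apply_of_ne hli hlj]; exact hz l

theorem card_ne_transfer_lt [Fintype ι] {x : ι → ℝ} (hij : i ≠ j) (hi : x i ≠ z i)
    (hj : x j ≠ z j) (hδ : x i = z i - δ ∨ x j = z j + δ) :
    #{l | x l ≠ transfer z i j δ l} < #{l | x l ≠ z l} := by
  refine card_lt_card ((ssubset_iff_of_subset fun l hl => ?_).2 ?_)
  · simp only [mem_filter, mem_univ, true_and] at hl ⊢
    rcases eq_or_ne l i with rfl | hli
    · exact hi
    rcases eq_or_ne l j with rfl | hlj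
    · exact hj
    · rwa [transfer_apply_of_ne hli hlj] at hl
  · rcases hδ with hδ | hδ
    · exact ⟨i, by simpa using hi, by simpa [transfer_apply_left hij] using hδ⟩
    · exact ⟨j, by simpa using hj, by simpa [transfer_apply_right hij] using hδ⟩

end Transfer

theorem esymm_lt_esymm_transfer {n k : ℕ} {z : Fin n → ℝ} {i j : Fin n} {δ : ℝ} (hij : i ≠ j)
    (hz : ∀ l, 0 < z l) (hδ : 0 < δ) (hδz : δ < z i - z j) (hk2 : 2 ≤ k) (hkn : k ≤ n) :
    esymm n k z < esymm n k (transfer z i j δ) := by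
  refine esymm_lt_esymm_of_add_eq_of_mul_lt hij hz hk2 hkn
    (fun l hli hlj => transfer_apply_of_ne hli hlj) ?_ ?_ <;>
    rw [transfer_apply_left hij, transfer_apply_right hij]
  · ring
  · nlinarith

/-- For antitone `x` this is majorization `x ≺ z`; `z` is not required to be sorted, since
transfers do not keep it sorted. -/
structure PrefixMajorized {n : ℕ} (x z : Fin n → ℝ) : Prop where
  sum_Iic_le : ∀ m, ∑ l ∈ Iic m, x l ≤ ∑ l ∈ Iic m, z l
  sum_eq : ∑ l, x l = ∑ l, z l

namespace PrefixMajorized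

variable {n : ℕ} {x z : Fin n → ℝ}

theorem exists_first_deficit (h : PrefixMajorized x z) (hne : x ≠ z) :
    ∃ j, z j < x j ∧ ∀ l < j, x l ≤ z l := by
  have hex : ∃ l, z l < x l := by
    by_contra! hle
    exact hne (funext fun l =>
      (sum_eq_sum_iff_of_le fun l _ => hle l).1 h.sum_eq l (mem_univ l))
  obtain ⟨j, hj, hmin⟩ := wellFounded_lt.has_min {l | z l < x l} hex
  exact ⟨j, hj, fun l hl => not_lt.1 fun h' => hmin l h' hl⟩

theorem exists_surplus_before (h : PrefixMajorized x z) {j : Fin n} (hj : z j < x j) :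
    ∃ i < j, x i < z i := by
  by_contra! hle
  have hlt : ∑ l ∈ Iic j, z l < ∑ l ∈ Iic j, x l := by
    refine sum_lt_sum (fun l hl => ?_) ⟨j, mem_Iic.2 le_rfl, hj⟩
    rcases (mem_Iic.1 hl).lt_or_eq with hlj | rfl
    · exact hle l hlj
    · exact hj.le
  exact (h.sum_Iic_le j).not_gt hlt

theorem transfer_of_lt (h : PrefixMajorized x z) {i j : Fin n} {δ : ℝ} (hij : i < j)
    (hdef : ∀ l < j, x l ≤ z l) (hδ : δ ≤ z i - x i) :
    PrefixMajorized x (transfer z i j δ) where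
  sum_eq := by simp [sum_transfer, h.sum_eq]
  sum_Iic_le m := by
    rw [sum_transfer]
    by_cases hjm : j ≤ m
    · simp only [mem_Iic, hjm, hij.le.trans hjm, if_true]
      linarith [h.sum_Iic_le m]
    have hle : ∑ l ∈ Iic m, x l ≤ ∑ l ∈ Iic m, (z l - (Pi.single i δ : Fin n → ℝ) l) := by
      refine sum_le_sum fun l hl => ?_
      have hlj : l < j := (mem_Iic.1 hl).trans_lt (not_le.1 hjm)
      rcases eq_or_ne l i with rfl | hli
      · simp only [Pi.single_eq_same]; linarith
      · simpa [hli] using hdef l hlj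
    simpa [sum_sub_distrib, sum_pi_single', hjm] using hle

theorem esymm_lt (h : PrefixMajorized x z) (hx : Antitone x) (hz : ∀ l, 0 < z l) (hne : x ≠ z)
    {k : ℕ} (hk2 : 2 ≤ k) (hkn : k ≤ n) : esymm n k z < esymm n k x := by
  induction hd : #{l | x l ≠ z l} using Nat.strong_induction_on generalizing z with
  | _ d ih =>
    obtain ⟨j, hj, hdef⟩ := h.exists_first_deficit hne
    obtain ⟨i, hij, hi⟩ := h.exists_surplus_before hj
    set δ := min (z i - x i) (x j - z j)
    have hδ : 0 < δ := lt_min (sub_pos.2 hi) (sub_pos.2 hj)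
    have hδi : δ ≤ z i - x i := min_le_left _ _
    have hδj : δ ≤ x j - z j := min_le_right _ _
    have hδz : δ < z i - z j := by linarith [hx hij.le]
    have hlt := esymm_lt_esymm_transfer hij.ne hz hδ hδz hk2 hkn
    by_cases heq : x = transfer z i j δ
    · rwa [heq]
    have hcard := card_ne_transfer_lt (δ := δ) hij.ne hi.ne hj.ne' <| by
      rcases min_choice (z i - x i) (x j - z j) with h' | h'
      · left; linarith
      · right; linarith
    exact hlt.trans (ih _ (hd ▸ hcard) (h.transfer_of_lt hij hdef hδi)
      (transfer_pos hz hδ (by linarith [hz j])) heq rfl)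

end PrefixMajorized

theorem exists_perm_antitone {α : Type*} [LinearOrder α] {n : ℕ} (x : Fin n → α) :
    ∃ σ : Equiv.Perm (Fin n), Antitone (x ∘ σ) :=
  ⟨Fin.revPerm.trans (Tuple.sort x),
    (Tuple.monotone_sort x).comp_antitone fun _ _ h => Fin.rev_le_rev.2 h⟩

theorem Finset.sum_le_sum_of_card_eq {ι M : Type*} [AddCommMonoid M] [LinearOrder M]
    [IsOrderedAddMonoid M] {s t : Finset ι} {f : ι → M} (hst : #s = #t)
    (hle : ∀ i ∈ s, ∀ j ∈ t, f i ≤ f j) : ∑ i ∈ s, f i ≤ ∑ j ∈ t, f j := by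
  rcases s.eq_empty_or_nonempty with rfl | hs
  · simp [card_eq_zero.1 (hst.symm.trans card_empty)]
  calc ∑ i ∈ s, f i ≤ #s • s.sup' hs f := sum_le_card_nsmul _ _ _ fun i hi => le_sup' f hi
    _ = #t • s.sup' hs f := by rw [hst]
    _ ≤ ∑ j ∈ t, f j := card_nsmul_le_sum _ _ _ fun j hj => sup'_le hs f fun i hi => hle i hi j hj

theorem Antitone.sum_le_sum_of_isLowerSet {ι M : Type*} [LinearOrder ι] [AddCommMonoid M]
    [LinearOrder M] [IsOrderedAddMonoid M] {w : ι → M} (hw : Antitone w) {A B : Finset ι}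
    (hA : IsLowerSet (A : Set ι)) (hcard : #B = #A) : ∑ i ∈ B, w i ≤ ∑ i ∈ A, w i := by
  classical
  rw [← sum_inter_add_sum_sdiff B A, ← sum_inter_add_sum_sdiff A B, inter_comm]
  refine add_le_add le_rfl (sum_le_sum_of_card_eq (card_sdiff_comm hcard) fun b hb a ha => ?_)
  exact hw (not_le.1 fun hba => (mem_sdiff.1 hb).2 (hA hba (mem_sdiff.1 ha).1)).le

theorem prefixMajorized_comp_of_forall_exists_sum_le {n : ℕ} {x y : Fin n → ℝ}
    (hsum : ∑ i, x i = ∑ i, y i)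
    (hmaj : ∀ A : Finset (Fin n), ∃ B : Finset (Fin n), #B = #A ∧ ∑ i ∈ A, x i ≤ ∑ i ∈ B, y i)
    (σ τ : Equiv.Perm (Fin n)) (hτ : Antitone (y ∘ τ)) : PrefixMajorized (x ∘ σ) (y ∘ τ) where
  sum_eq := by simpa [Equiv.sum_comp] using hsum
  sum_Iic_le m := by
    obtain ⟨B, hB, hAB⟩ := hmaj ((Iic m).map σ.toEmbedding)
    calc ∑ l ∈ Iic m, (x ∘ σ) l = ∑ l ∈ (Iic m).map σ.toEmbedding, x l := by simp [sum_map]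
      _ ≤ ∑ l ∈ B, y l := hAB
      _ = ∑ l ∈ B.map τ.symm.toEmbedding, (y ∘ τ) l := by simp [sum_map]
      _ ≤ ∑ l ∈ Iic m, (y ∘ τ) l :=
        hτ.sum_le_sum_of_isLowerSet (by simpa using isLowerSet_Iic m) (by simpa using hB)

theorem majorization_and_esymm_eq_implies_rearrangement_general (n : ℕ) (x y : Fin n → ℝ)
    (hy : ∀ i, 0 < y i)
    (hsum : ∑ i, x i = ∑ i, y i)
    (hmaj : ∀ A : Finset (Fin n), ∃ B : Finset (Fin n),
      B.card = A.card ∧ ∑ i ∈ A, x i ≤ ∑ i ∈ B, y i)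
    (k : ℕ) (hk2 : 2 ≤ k) (hkn : k ≤ n)
    (he : esymm n k x = esymm n k y) :
    ∃ σ : Equiv.Perm (Fin n), x = y ∘ σ := by
  obtain ⟨σ, hσ⟩ := exists_perm_antitone x
  obtain ⟨τ, hτ⟩ := exists_perm_antitone y
  have hpre := prefixMajorized_comp_of_forall_exists_sum_le hsum hmaj σ τ hτ
  have hsorted : x ∘ σ = y ∘ τ := by
    by_contra hne
    have hlt := hpre.esymm_lt hσ (fun l => hy (τ l)) hne hk2 hkn
    rw [esymm_comp_perm, esymm_comp_perm, he] at hlt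
    exact hlt.false
  exact ⟨σ.symm.trans τ, funext fun l => by simpa using congrFun hsorted (σ.symm l)⟩

/-- If `x ≺ y` (majorization, expressed by equality of total sums together with:
for every subset `A` there is a subset `B` of the same cardinality with
`∑_{A} x ≤ ∑_{B} y`) and `e_k(x) = e_k(y)` for some `k ∈ {2,…,n}`, then `x` is a
rearrangement of `y`, i.e. the decreasing rearrangements coincide. -/
theorem majorization_and_esymm_eq_implies_rearrangement (n : ℕ) (x y : Fin n → ℝ)
    (hx : ∀ i, 0 < x i) (hy : ∀ i, 0 < y i)
    (hsum : ∑ i, x i = ∑ i, y i)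
    (hmaj : ∀ A : Finset (Fin n), ∃ B : Finset (Fin n),
      B.card = A.card ∧ ∑ i ∈ A, x i ≤ ∑ i ∈ B, y i)
    (k : ℕ) (hk2 : 2 ≤ k) (hkn : k ≤ n)
    (he : esymm n k x = esymm n k y) :
    ∃ σ : Equiv.Perm (Fin n), x = y ∘ σ :=
  majorization_and_esymm_eq_implies_rearrangement_general n x y hy hsum hmaj k hk2 hkn he
end

section
/- Let I ⊆ ℝ and f₁,…,fₙ : I → ℝ differentiable with Σᵢ fᵢ(t) = 0, f₁(t) ≤ … ≤ fₙ(t), and f₁'(t) ≤ … ≤ fₙ'(t) for all t ∈ I. Let h : D → ℝ be differentiable, monotone increasing, and convex, with all fᵢ(t) in D. Then H(t) = Σᵢ exp(h(fᵢ(t))) is monotone increasing on I. -/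
/-!
On the interior of `I` the derivative of `H = ∑ i, exp ∘ h ∘ fᵢ` is `∑ i, aᵢ fᵢ'` with
`aᵢ = exp (h fᵢ) * h' fᵢ`. Since `h` is increasing and convex, `h'` is nonnegative and increasing
on `D`, so `aᵢ` increases with `i`, as does `fᵢ'`. Chebyshev's sum inequality then gives
`n ∑ aᵢ fᵢ' ≥ (∑ aᵢ) (∑ fᵢ') = 0`, the last sum vanishing because `∑ fᵢ` is constant.
When `D` is a single point, `H` is constant and `h'` carries no information.
-/

open Real Set Filter Topology

theorem Monovary.sum_mul_nonneg_of_sum_eq_zero {ι α : Type*} [Fintype ι] [Semiring α]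
    [LinearOrder α] [IsStrictOrderedRing α] [ExistsAddOfLE α] {a b : ι → α}
    (hab : Monovary a b) (hb : ∑ i, b i = 0) : 0 ≤ ∑ i, a i * b i := by
  cases isEmpty_or_nonempty ι
  · simp
  have cheb := hab.sum_mul_sum_le_card_mul_sum
  rw [hb, mul_zero] at cheb
  exact nonneg_of_mul_nonneg_right cheb (by exact_mod_cast Fintype.card_pos)

theorem ConvexOn.monotoneOn_of_hasDerivAt {D : Set ℝ} {h h' : ℝ → ℝ} (hconv : ConvexOn ℝ D h)
    (hderiv : ∀ x ∈ D, HasDerivAt h (h' x) x) : MonotoneOn h' D :=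
  (hconv.monotoneOn_deriv fun x hx => (hderiv x hx).differentiableAt).congr
    fun x hx => (hderiv x hx).deriv

theorem MonotoneOn.nonneg_of_hasDerivAt {D : Set ℝ} {h : ℝ → ℝ} {d x : ℝ}
    (hmono : MonotoneOn h D) (hD : IsPreconnected D) (hDnt : D.Nontrivial) (hx : x ∈ D)
    (hd : HasDerivAt h d x) : 0 ≤ d :=
  hd.hasDerivWithinAt.nonneg_of_monotoneOn (hD.preperfect_of_nontrivial hDnt x hx) hmono

theorem sum_hasDerivAt_eq_zero_of_sum_eventually_eq_zero {ι : Type*} [Fintype ι]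
    {f : ι → ℝ → ℝ} {f' : ι → ℝ} {t : ℝ} (hderiv : ∀ i, HasDerivAt (f i) (f' i) t)
    (hsum : ∀ᶠ s in 𝓝 t, ∑ i, f i s = 0) : ∑ i, f' i = 0 :=
  (HasDerivAt.fun_sum fun i _ => hderiv i).unique <|
    (hasDerivAt_const t 0).congr_of_eventuallyEq hsum

theorem sum_exp_comp_monotone_of_ordered (I : Set ℝ) (hI : Convex ℝ I) (n : ℕ)
    (f f' : Fin n → ℝ → ℝ) (D : Set ℝ) (h h' : ℝ → ℝ)
    (hderiv : ∀ i, ∀ t ∈ I, HasDerivAt (f i) (f' i t) t)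
    (hsum : ∀ t ∈ I, ∑ i, f i t = 0)
    (hord : ∀ t ∈ I, ∀ i j : Fin n, i ≤ j → f i t ≤ f j t)
    (hord' : ∀ t ∈ I, ∀ i j : Fin n, i ≤ j → f' i t ≤ f' j t)
    (hmem : ∀ i, ∀ t ∈ I, f i t ∈ D)
    (hhderiv : ∀ x ∈ D, HasDerivAt h (h' x) x)
    (hhmono : MonotoneOn h D)
    (hhconv : ConvexOn ℝ D h) :
    MonotoneOn (fun t => ∑ i, exp (h (f i t))) I := by
  rcases D.subsingleton_or_nontrivial with hD | hD
  · intro s hs t ht _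
    simp only [fun i => hD (hmem i s hs) (hmem i t ht), le_refl]
  have hh'mono := hhconv.monotoneOn_of_hasDerivAt hhderiv
  have hh'nonneg : ∀ x ∈ D, 0 ≤ h' x := fun x hx =>
    hhmono.nonneg_of_hasDerivAt hhconv.1.isPreconnected hD hx (hhderiv x hx)
  have hH : ∀ t ∈ I, HasDerivAt (fun s => ∑ i, exp (h (f i s)))
      (∑ i, exp (h (f i t)) * h' (f i t) * f' i t) t := fun t ht =>
    (HasDerivAt.fun_sum (u := Finset.univ) fun i _ =>
      ((hhderiv _ (hmem i t ht)).comp t (hderiv i t ht)).exp).congr_deriv <| by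
        simp only [Function.comp_apply, mul_assoc]
  refine monotoneOn_of_hasDerivWithinAt_nonneg hI
    (fun t ht => (hH t ht).continuousAt.continuousWithinAt)
    (fun t ht => (hH t (interior_subset ht)).hasDerivWithinAt) fun t ht => ?_
  have htI := interior_subset ht
  have hsum' : ∑ i, f' i t = 0 := sum_hasDerivAt_eq_zero_of_sum_eventually_eq_zero
    (fun i => hderiv i t htI) <| mem_of_superset (isOpen_interior.mem_nhds ht)
      fun s hs => hsum s (interior_subset hs)
  have hweight : Monotone fun i => exp (h (f i t)) * h' (f i t) := fun i j hij =>
    mul_le_mul (exp_monotone (hhmono (hmem i t htI) (hmem j t htI) (hord t htI i j hij)))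
      (hh'mono (hmem i t htI) (hmem j t htI) (hord t htI i j hij))
      (hh'nonneg _ (hmem i t htI)) (exp_pos _).le
  exact (hweight.monovary fun i j hij => hord' t htI i j hij).sum_mul_nonneg_of_sum_eq_zero hsum'
end

section
/- Let a, b ∈ ℝ₊ⁿ and k₁,…,k_m ∈ [0,∞). Then Σᵢ aᵢ·log(∏_{s=1}^m (aᵢ/bᵢ + k_s)) ≥ (Σᵢ aᵢ)·log(∏_{s=1}^m ((Σᵢ aᵢ)/(Σᵢ bᵢ) + k_s)). -/
/-!
For `k ≥ 0` the function `x ↦ x log (x + k)` is convex on `(0, ∞)`: it is `(x + k) log (x + k)`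
minus `k log (x + k)`. Jensen's inequality for this function, with weights `bᵢ / Σ b` at the points
`aᵢ / bᵢ`, is the log sum inequality with a single shift `k`; the logarithm of the product over `s`
is the sum over `s` of these.
-/

open Real Set Finset

lemma Real.convexOn_mul_log_add {k : ℝ} (hk : 0 ≤ k) :
    ConvexOn ℝ (Ioi 0) fun x => x * log (x + k) := by
  have hshift : ConvexOn ℝ (Ioi 0) fun x => (x + k) * log (x + k) :=
    (convexOn_mul_log.translate_left k).subset
      (fun x (hx : 0 < x) => show 0 ≤ k + x by linarith) (convex_Ioi 0)
  have hlog : ConvexOn ℝ (Ioi 0) fun x => -(k * log (x + k)) :=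
    ((strictConcaveOn_log_Ioi.concaveOn.translate_left k).subset
      (fun x (hx : 0 < x) => show 0 < k + x by linarith) (convex_Ioi 0)).smul hk |>.neg
  refine (hshift.add hlog).congr fun x _ => ?_
  simp only [Pi.add_apply]
  ring

theorem ConvexOn.perspective_sum_le {ι : Type*} {f : ℝ → ℝ} (hf : ConvexOn ℝ (Ioi 0) f)
    (s : Finset ι) (a b : ι → ℝ) (ha : ∀ i ∈ s, 0 < a i) (hb : ∀ i ∈ s, 0 < b i) :
    (∑ i ∈ s, b i) * f ((∑ i ∈ s, a i) / ∑ i ∈ s, b i) ≤ ∑ i ∈ s, b i * f (a i / b i) := by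
  rcases s.eq_empty_or_nonempty with rfl | hs
  · simp
  set B := ∑ i ∈ s, b i
  have hB : 0 < B := sum_pos hb hs
  have hmean : ∑ i ∈ s, (b i / B) • (a i / b i) = (∑ i ∈ s, a i) / B := by
    rw [sum_div]
    refine sum_congr rfl fun i hi => ?_
    rw [smul_eq_mul]
    field_simp [(hb i hi).ne']
  have hjensen := hf.map_sum_le (t := s) (w := fun i => b i / B) (p := fun i => a i / b i)
    (fun i hi => (div_pos (hb i hi) hB).le) (by rw [← sum_div, div_self hB.ne'])
    (fun i hi => div_pos (ha i hi) (hb i hi))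
  rw [hmean] at hjensen
  calc B * f ((∑ i ∈ s, a i) / B) ≤ B * ∑ i ∈ s, (b i / B) • f (a i / b i) := by gcongr
    _ = ∑ i ∈ s, b i * f (a i / b i) := by
      rw [mul_sum]
      refine sum_congr rfl fun i _ => ?_
      rw [smul_eq_mul]
      field_simp

theorem Real.sum_mul_log_div_add_le {ι : Type*} (s : Finset ι) (a b : ι → ℝ)
    (ha : ∀ i ∈ s, 0 < a i) (hb : ∀ i ∈ s, 0 < b i) {k : ℝ} (hk : 0 ≤ k) :
    (∑ i ∈ s, a i) * log ((∑ i ∈ s, a i) / (∑ i ∈ s, b i) + k) ≤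
      ∑ i ∈ s, a i * log (a i / b i + k) := by
  rcases s.eq_empty_or_nonempty with rfl | hs
  · simp
  have key := (convexOn_mul_log_add hk).perspective_sum_le s a b ha hb
  have hB : (∑ i ∈ s, b i) ≠ 0 := (sum_pos hb hs).ne'
  simp only [← mul_assoc, mul_div_cancel₀ _ hB] at key
  convert key using 1
  exact sum_congr rfl fun i hi => by rw [mul_div_cancel₀ _ (hb i hi).ne']

theorem generalized_log_sum_inequality (n m : ℕ) (a b : Fin n → ℝ)
    (ha : ∀ i, 0 < a i) (hb : ∀ i, 0 < b i)
    (k : Fin m → ℝ) (hk : ∀ s, 0 ≤ k s) :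
    (∑ i, a i) * log (∏ s, ((∑ i, a i) / (∑ i, b i) + k s)) ≤
      ∑ i, a i * log (∏ s, (a i / b i + k s)) := by
  rcases isEmpty_or_nonempty (Fin n) with hn | hn
  · simp
  have hlog_prod {x : ℝ} (hx : 0 < x) : log (∏ s, (x + k s)) = ∑ s, log (x + k s) :=
    log_prod fun s _ => (add_pos_of_pos_of_nonneg hx (hk s)).ne'
  have hA : 0 < ∑ i, a i := sum_pos (fun i _ => ha i) univ_nonempty
  have hB : 0 < ∑ i, b i := sum_pos (fun i _ => hb i) univ_nonempty
  rw [hlog_prod (div_pos hA hB), mul_sum]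
  simp only [hlog_prod (div_pos (ha _) (hb _)), mul_sum]
  rw [sum_comm]
  exact sum_le_sum fun s _ =>
    sum_mul_log_div_add_le univ a b (fun i _ => ha i) (fun i _ => hb i) (hk s)
end
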